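/- For any subsets J, K ⊆ [n] with 1 < |J|, |K| < n-1, if ν_J = ν_K in ℝ^(C(n,2)) then K = J or K = [n] ∖ J (assuming n ≥ 4). -/
import Mathlib


/-- The coordinates of ℝ^(C(n,2)), indexed by 2-element subsets of {1,…,n}. -/
def Pairs (n : ℕ) := {s : Finset (Fin n) // s.card = 2}

/-- The vector ν_J ∈ ℝ^(C(n,2)): (ν_J)_{i,j} = 1 if exactly one of i,j lies in J, else 0. -/
def nu (n : ℕ) (J : Finset (Fin n)) : Pairs n → ℝ :=
  fun s => if (s.1 ∩ J).card = 1 then 1 else 0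

lemma aux_card (n : ℕ) (J : Finset (Fin n)) (i j : Fin n) (hij : i ≠ j) :
    ({i, j} ∩ J).card = 1 ↔ ¬(i ∈ J ↔ j ∈ J) := by
  by_cases hi : i ∈ J <;> by_cases hj : j ∈ J <;>
    simp [Finset.insert_inter_of_mem, Finset.insert_inter_of_notMem,
      Finset.singleton_inter_of_mem, Finset.singleton_inter_of_notMem, hi, hj,
      Finset.card_insert_of_notMem, hij]

/-- For n ≥ 4 and J, K ⊆ [n] with 1 < |J|, |K| < n-1, if ν_J = ν_K then
K = J or K = [n] ∖ J. -/
theorem nu_eq_iff_split (n : ℕ) (hn : 4 ≤ n) (J K : Finset (Fin n))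
    (hJ1 : 1 < J.card) (hJ2 : J.card < n - 1)
    (hK1 : 1 < K.card) (hK2 : K.card < n - 1)
    (h : nu n J = nu n K) : K = J ∨ K = Jᶜ := by
  have hpair : ∀ i j : Fin n, i ≠ j → ({i, j} : Finset (Fin n)).card = 2 := by
    intro i j hij
    rw [Finset.card_insert_of_notMem (by simp [hij]), Finset.card_singleton]
  have key : ∀ i j : Fin n, i ≠ j → (¬(i ∈ J ↔ j ∈ J) ↔ ¬(i ∈ K ↔ j ∈ K)) := by
    intro i j hij
    have hh := congrFun h ⟨{i, j}, hpair i j hij⟩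
    simp only [nu] at hh
    rw [← aux_card n J i j hij, ← aux_card n K i j hij]
    by_cases h1 : ({i, j} ∩ J).card = 1 <;> by_cases h2 : ({i, j} ∩ K).card = 1 <;>
      simp [h1, h2] at hh ⊢
  obtain ⟨a, ha⟩ := Finset.card_pos.mp (by omega : 0 < J.card)
  by_cases haK : a ∈ K
  · left
    ext x
    by_cases hx : x = a
    · subst hx; simp [ha, haK]
    · have := key x a hx
      tauto
  · right
    ext x
    rw [Finset.mem_compl]
    by_cases hx : x = a
    · subst hx; simp [ha, haK]
    · have := key x a hx
      tauto
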